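/- Let A and B be Banach algebras and let T : A → B be a surjective bounded algebra homomorphism. Define the bounded bilinear map m : A × A → B by m(a₁,a₂) = T(a₁a₂). Then B is Arens regular if and only if m is Arens regular. -/

import Mathlib

open Filter Topology ContinuousLinearMap NormedSpace

noncomputable section

namespace NormedSpace

/-- The topological dual of a normed space, as in the older Mathlib (`E →L[𝕜] 𝕜`). -/
abbrev Dual (𝕜 : Type*) [NontriviallyNormedField 𝕜] (E : Type*) [SeminormedAddCommGroup E]
    [NormedSpace 𝕜 E] : Type _ :=
  E →L[𝕜] 𝕜

end NormedSpace

variable {X Y Z W E F : Type*}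
  [NormedAddCommGroup X] [NormedSpace ℂ X]
  [NormedAddCommGroup Y] [NormedSpace ℂ Y]
  [NormedAddCommGroup Z] [NormedSpace ℂ Z]
  [NormedAddCommGroup E] [NormedSpace ℂ E]
  [NormedAddCommGroup F] [NormedSpace ℂ F]

/-- The (first) Arens adjoint `m* : Z* × X → Y*` of a bounded bilinear map
`m : X × Y → Z`, characterized by `⟨m*(z',x), y⟩ = ⟨z', m(x,y)⟩`. -/
noncomputable def arensAdj (m : X →L[ℂ] Y →L[ℂ] Z) :
    Dual ℂ Z →L[ℂ] X →L[ℂ] Dual ℂ Y :=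
  ((ContinuousLinearMap.compL ℂ Y Z ℂ).flip.comp m).flip

/-- The Arens triple adjoint `m*** : X** × Y** → Z**`. -/
noncomputable def arensExt (m : X →L[ℂ] Y →L[ℂ] Z) :
    Dual ℂ (Dual ℂ X) →L[ℂ] Dual ℂ (Dual ℂ Y) →L[ℂ] Dual ℂ (Dual ℂ Z) :=
  arensAdj (arensAdj (arensAdj m))

/-- A map between dual spaces is weak*-weak* continuous. -/
def IsWeakStarCont (f : Dual ℂ E → Dual ℂ F) : Prop :=
  Continuous fun x : WeakDual ℂ E =>
    StrongDual.toWeakDual (f (WeakDual.toStrongDual x))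

/-- First topological center of a bounded bilinear map. -/
def arensZ1 (m : X →L[ℂ] Y →L[ℂ] Z) : Set (Dual ℂ (Dual ℂ X)) :=
  {x'' | IsWeakStarCont fun y'' => arensExt m x'' y''}

/-- Second topological center of a bounded bilinear map. -/
def arensZ2 (m : X →L[ℂ] Y →L[ℂ] Z) : Set (Dual ℂ (Dual ℂ Y)) :=
  {y'' | IsWeakStarCont fun x'' => arensExt m.flip y'' x''}

/-- `m` is Arens regular when `m*** = m^{t***t}`. -/
def ArensRegular (m : X →L[ℂ] Y →L[ℂ] Z) : Prop :=
  arensExt m = (arensExt m.flip).flip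

/-- `m` is left strongly Arens irregular when `Z₁(m)` is the canonical image of `X`. -/
def LeftStronglyArensIrregular (m : X →L[ℂ] Y →L[ℂ] Z) : Prop :=
  arensZ1 m = Set.range (NormedSpace.inclusionInDoubleDual ℂ X)

/-- `m` is right strongly Arens irregular when `Z₂(m)` is the canonical image of `Y`. -/
def RightStronglyArensIrregular (m : X →L[ℂ] Y →L[ℂ] Z) : Prop :=
  arensZ2 m = Set.range (NormedSpace.inclusionInDoubleDual ℂ Y)

/-- The adjoint `T* : F* → E*` of a bounded linear map. -/
noncomputable def dualMap' (T : E →L[ℂ] F) : Dual ℂ F →L[ℂ] Dual ℂ E :=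
  (ContinuousLinearMap.compL ℂ E F ℂ).flip T

/-- The second adjoint `T** : E** → F**` of a bounded linear map. -/
noncomputable def bidualMap (T : E →L[ℂ] F) :
    Dual ℂ (Dual ℂ E) →L[ℂ] Dual ℂ (Dual ℂ F) :=
  dualMap' (dualMap' T)

/-- A net in `A`: a function from a nonempty directed preorder to `A`. -/
structure Net (A : Type*) where
  ι : Type
  [pre : Preorder ι]
  [dir : IsDirected ι (· ≤ ·)]
  [ne : Nonempty ι]
  e : ι → A

attribute [instance] Net.pre Net.dir Net.ne

/-- A bounded approximate identity for a (non-unital) Banach algebra. -/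
def IsBAI {A : Type*} [NonUnitalNormedRing A] (N : Net A) : Prop :=
  (∃ C : ℝ, ∀ i, ‖N.e i‖ ≤ C) ∧
  (∀ a : A, Tendsto (fun i => N.e i * a) atTop (𝓝 a)) ∧
  (∀ a : A, Tendsto (fun i => a * N.e i) atTop (𝓝 a))

end

/-!
The homomorphism property factors `m` as `m(a₁, a₂) = π_B(T a₁, T a₂)`, and Arens extensions
are natural under such factorisations: `m***(x'', y'') = π_B***(T** x'', T** y'')`, and likewise
for the transposed maps. So `m` is Arens regular exactly when `π_B***` and `π_B^{t***t}` agree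
on the range of `T** × T**`. This range is everything: by the open mapping theorem `T*` is bounded
below, so by Hahn–Banach its adjoint `T**` is onto.
-/

section Arens

variable {X X₁ Y Y₁ Z E F : Type*}
  [NormedAddCommGroup X] [NormedSpace ℂ X]
  [NormedAddCommGroup X₁] [NormedSpace ℂ X₁]
  [NormedAddCommGroup Y] [NormedSpace ℂ Y]
  [NormedAddCommGroup Y₁] [NormedSpace ℂ Y₁]
  [NormedAddCommGroup Z] [NormedSpace ℂ Z]
  [NormedAddCommGroup E] [NormedSpace ℂ E]
  [NormedAddCommGroup F] [NormedSpace ℂ F]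

theorem arensRegular_iff_forall (m : X →L[ℂ] Y →L[ℂ] Z) :
    ArensRegular m ↔ ∀ x'' y'', arensExt m x'' y'' = arensExt m.flip y'' x'' :=
  ⟨fun h x'' y'' => by rw [h]; rfl, fun h => ext fun x'' => ext fun y'' => h x'' y''⟩

theorem arensExt_eq_arensExt_bidualMap (p : X₁ →L[ℂ] Y₁ →L[ℂ] Z) (S : X →L[ℂ] X₁)
    (S' : Y →L[ℂ] Y₁) (m : X →L[ℂ] Y →L[ℂ] Z) (hm : ∀ x y, m x y = p (S x) (S' y))
    (x'' : Dual ℂ (Dual ℂ X)) (y'' : Dual ℂ (Dual ℂ Y)) :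
    arensExt m x'' y'' = arensExt p (bidualMap S x'') (bidualMap S' y'') := by
  ext z'
  refine congrArg x'' (ext fun x => congrArg y'' (ext fun y => ?_))
  exact congrArg z' (hm x y)

theorem arensRegular_iff_of_apply_eq (p : X₁ →L[ℂ] Y₁ →L[ℂ] Z) (S : X →L[ℂ] X₁)
    (S' : Y →L[ℂ] Y₁) (m : X →L[ℂ] Y →L[ℂ] Z) (hm : ∀ x y, m x y = p (S x) (S' y))
    (hS : Function.Surjective (bidualMap S)) (hS' : Function.Surjective (bidualMap S')) :
    ArensRegular m ↔ ArensRegular p := by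
  simp only [arensRegular_iff_forall, arensExt_eq_arensExt_bidualMap p S S' m hm,
    arensExt_eq_arensExt_bidualMap p.flip S' S m.flip fun y x => hm x y]
  refine ⟨fun h a b => ?_, fun h x'' y'' => h _ _⟩
  obtain ⟨x'', rfl⟩ := hS a
  obtain ⟨y'', rfl⟩ := hS' b
  exact h x'' y''

theorem exists_antilipschitzWith_dualMap' [CompleteSpace E] [CompleteSpace F]
    (T : E →L[ℂ] F) (hT : Function.Surjective T) : ∃ K, AntilipschitzWith K (dualMap' T) := by
  obtain ⟨C, hC₀, hC⟩ := T.exists_preimage_norm_le hT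
  refine ⟨⟨C, hC₀.le⟩, (dualMap' T).antilipschitz_of_bound fun f => ?_⟩
  refine f.opNorm_le_bound (by positivity) fun y => ?_
  obtain ⟨x, rfl, hx⟩ := hC y
  calc ‖f (T x)‖ = ‖dualMap' T f x‖ := rfl
    _ ≤ ‖dualMap' T f‖ * (C * ‖T x‖) := (dualMap' T f).le_opNorm_of_le hx
    _ = C * ‖dualMap' T f‖ * ‖T x‖ := by ring

theorem dualMap'_surjective_of_antilipschitzWith [CompleteSpace E] [CompleteSpace F]
    {K : NNReal} (S : E →L[ℂ] F) (hS : AntilipschitzWith K S) :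
    Function.Surjective (dualMap' S) := by
  intro g
  let e := S.equivRange hS.injective (hS.isClosed_range S.uniformContinuous)
  obtain ⟨h, hh, -⟩ := exists_extension_norm_eq _ (g.comp e.symm.toContinuousLinearMap)
  refine ⟨h, ext fun x => ?_⟩
  change h (S x) = g x
  simpa [e] using hh ⟨S x, x, rfl⟩

theorem bidualMap_surjective [CompleteSpace E] [CompleteSpace F] (T : E →L[ℂ] F)
    (hT : Function.Surjective T) :
    Function.Surjective (bidualMap T) :=
  have ⟨_, hK⟩ := exists_antilipschitzWith_dualMap' T hT
  dualMap'_surjective_of_antilipschitzWith _ hK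

end Arens

/-- For a surjective bounded algebra homomorphism `T : A → B`,
`B` is Arens regular iff `m(a₁,a₂) = T(a₁a₂)` is Arens regular. -/
theorem stmt_8 {A B : Type*} [NonUnitalNormedRing A] [NormedSpace ℂ A] [IsScalarTower ℂ A A] [SMulCommClass ℂ A A] [CompleteSpace A] [NonUnitalNormedRing B] [NormedSpace ℂ B] [IsScalarTower ℂ B B] [SMulCommClass ℂ B B] [CompleteSpace B]
    (T : A →L[ℂ] B)
    (hhom : ∀ a b : A, T (a * b) = T a * T b)
    (hsurj : Function.Surjective T) :
    ArensRegular (ContinuousLinearMap.mul ℂ B) ↔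
      ArensRegular
        ((ContinuousLinearMap.compL ℂ A A B T).comp (ContinuousLinearMap.mul ℂ A)) := by
  refine (arensRegular_iff_of_apply_eq _ T T _ (fun a b => ?_) (bidualMap_surjective T hsurj)
    (bidualMap_surjective T hsurj)).symm
  simp [hhom]
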